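/- Let (M_b ⊕ M_b, ∼) be an arbitrage-free combined market, let π_1 be its uniquely determined 1-price functional (so (γ1,γ2) ∼ π_1(γ1,γ2)·(δ0,o) for all (γ1,γ2)), let P¹_t := π_1(δ_t, o), and define the time-t forward 1-price π_{1,t} := π_1 / P¹_t. Then for every t ≥ 0 there exists a uniquely determined linear time-t forward 2-price π_{2,t} (characterized by (γ1,γ2) ∼ π_{2,t}(γ1,γ2)·(o,δ_t)) which is strictly positive on (M_b⁺ ⊕ M_b⁺) \ {(o,o)}, and it is given by π_{2,t} = π_{1,t} / π_{1,t}(o, δ_t). -/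

import Mathlib

/-!
A reflexive, symmetric, additive relation on a group is automatically transitive, so a market is
an additive congruence. Without arbitrage, a numeraire `e > 0` admits at most one price functional
`π` (`p ∼ π p • e`), and such a `π` is additive and strictly positive on the cone, hence monotone.
An additive monotone map `ℝ → ℝ` is linear, so `π` is `ℝ`-homogeneous on the cone, and therefore
linear because, by the Jordan decomposition, every signed measure is a difference of positive
ones. Dividing `π₁` by `π₁ (o, δ_t)` gives a price functional in the numeraire `(o, δ_t)`; by
uniqueness every forward 2-price is this one, and linearity and positivity hold for any price
functional.
-/
open MeasureTheory
open scoped NNReal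

/-- The unit zero-coupon bond with maturity `t`: the Dirac measure at `t`,
as a finite signed Borel measure on `[0,∞)` (modeled as `ℝ≥0`). -/
noncomputable def uzcb (t : ℝ≥0) : SignedMeasure ℝ≥0 :=
  (MeasureTheory.Measure.dirac t).toSignedMeasure

/-- A combined market: a reflexive, symmetric, additive relation on the direct sum
M_b ⊕ M_b such that every nonzero pair of nonnegative cash flows has at least one
strictly positive 1-price. -/
def IsCombinedMarket
    (R : SignedMeasure ℝ≥0 × SignedMeasure ℝ≥0 →
         SignedMeasure ℝ≥0 × SignedMeasure ℝ≥0 → Prop) : Prop :=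
  (∀ p, R p p) ∧
  (∀ p q, R p q → R q p) ∧
  (∀ p₁ p₂ q₁ q₂, R p₁ p₂ → R q₁ q₂ → R (p₁ + q₁) (p₂ + q₂)) ∧
  (∀ p : SignedMeasure ℝ≥0 × SignedMeasure ℝ≥0, 0 ≤ p.1 → 0 ≤ p.2 → p ≠ 0 →
    ∃ b : ℝ, 0 < b ∧ R p (b • ((uzcb 0, 0) : SignedMeasure ℝ≥0 × SignedMeasure ℝ≥0)))

/-- No-arbitrage for a combined market. -/
def NoArbC
    (R : SignedMeasure ℝ≥0 × SignedMeasure ℝ≥0 →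
         SignedMeasure ℝ≥0 × SignedMeasure ℝ≥0 → Prop) : Prop :=
  ¬ ∃ p : SignedMeasure ℝ≥0 × SignedMeasure ℝ≥0, 0 ≤ p.1 ∧ 0 ≤ p.2 ∧ p ≠ 0 ∧ R 0 p

theorem AddMonoidHom.apply_eq_mul_of_monotone (f : ℝ →+ ℝ) (hf : Monotone f) (c : ℝ) :
    f c = c * f 1 := by
  have hrat (q : ℚ) : f q = q * f 1 := by simpa using map_ratCast_smul f ℝ ℝ q (1 : ℝ)
  have hf1 : 0 ≤ f 1 := by simpa using hf zero_le_one
  have hle (c : ℝ) : f c ≤ c * f 1 := by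
    refine le_of_forall_pos_le_add fun ε hε => ?_
    have hδ : 0 < ε / (f 1 + 1) := by positivity
    obtain ⟨r, hcr, hr⟩ := exists_rat_btwn (lt_add_of_pos_right c hδ)
    calc f c ≤ f r := hf hcr.le
      _ = r * f 1 := hrat r
      _ ≤ (c + ε / (f 1 + 1)) * f 1 := by gcongr
      _ ≤ c * f 1 + ε := by
        rw [add_mul, div_mul_eq_mul_div]
        gcongr
        exact div_le_of_le_mul₀ (by positivity) hε.le (by nlinarith)
  refine le_antisymm (hle c) ?_
  simpa using hle (-c)

def AddCon.ofSymmAdd {G : Type*} [AddCommGroup G] (r : G → G → Prop) (refl : ∀ x, r x x)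
    (symm : ∀ {x y}, r x y → r y x) (add : ∀ {w x y z}, r w x → r y z → r (w + y) (x + z)) :
    AddCon G where
  r := r
  iseqv := ⟨refl, symm, fun {x y z} hxy hyz => by
    simpa using add (add hxy hyz) (refl (-y))⟩
  add' := add

namespace AddCon

variable {V : Type*} [AddCommGroup V]

def IsArbitrageFree [PartialOrder V] (c : AddCon V) : Prop := ∀ p, 0 < p → ¬ c 0 p

variable [Module ℝ V]

/-- `π` prices every claim in units of the numeraire `e`: the paper's 1-price is the case
`e = (δ₀, o)`, its time-`t` forward 2-price the case `e = (o, δ_t)`. -/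
def IsPriceFunctional (c : AddCon V) (e : V) (π : V → ℝ) : Prop :=
  ∀ p, c p (π p • e)

theorem IsPriceFunctional.rel_of_eq {c : AddCon V} {e : V} {π : V → ℝ}
    (hπ : c.IsPriceFunctional e π) {p q : V} (h : π p = π q) : c p q :=
  c.trans (hπ p) (h ▸ c.symm (hπ q))

variable [PartialOrder V] [PosSMulMono ℝ V] {c : AddCon V} {e : V} {π : V → ℝ}

theorem IsArbitrageFree.eq_of_rel_smul (hc : c.IsArbitrageFree) {v : V} (hv : 0 < v) {a b : ℝ}
    (h : c (a • v) (b • v)) : a = b := by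
  have := PosSMulMono.toPosSMulStrictMono (α := ℝ) (β := V)
  have hle {a b : ℝ} (h : c (a • v) (b • v)) : b ≤ a := not_lt.1 fun hab =>
    hc _ (smul_pos (sub_pos.2 hab) hv) (by simpa [sub_smul] using c.sub h (c.refl (a • v)))
  exact le_antisymm (hle (c.symm h)) (hle h)

namespace IsPriceFunctional

theorem eq_of_rel (hπ : c.IsPriceFunctional e π) (hc : c.IsArbitrageFree) (he : 0 < e)
    {p : V} {b : ℝ} (h : c p (b • e)) : π p = b :=
  hc.eq_of_rel_smul he (c.trans (c.symm (hπ p)) h)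

theorem unique {π' : V → ℝ} (hπ : c.IsPriceFunctional e π) (hπ' : c.IsPriceFunctional e π')
    (hc : c.IsArbitrageFree) (he : 0 < e) : π' = π :=
  funext fun p => (hπ.eq_of_rel hc he (hπ' p)).symm

theorem map_add (hπ : c.IsPriceFunctional e π) (hc : c.IsArbitrageFree) (he : 0 < e) (p q : V) :
    π (p + q) = π p + π q :=
  hπ.eq_of_rel hc he (by rw [add_smul]; exact c.add (hπ p) (hπ q))

variable [IsOrderedAddMonoid V]

theorem pos (hπ : c.IsPriceFunctional e π) (hc : c.IsArbitrageFree) (he : 0 ≤ e) {p : V}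
    (hp : 0 < p) : 0 < π p := by
  by_contra! hle
  -- holding `p` and shorting `π p • e` costs nothing and pays off `p - π p • e ≥ p > 0`
  refine hc (p - π p • e) ?_ (c.symm (by simpa using c.sub (hπ p) (c.refl (π p • e))))
  simpa [sub_eq_add_neg] using add_pos_of_pos_of_nonneg hp (smul_nonneg (neg_nonneg.2 hle) he)

theorem strictMono (hπ : c.IsPriceFunctional e π) (hc : c.IsArbitrageFree) (he : 0 < e) :
    StrictMono π := fun p q hpq => by
  have hq := hπ.map_add hc he p (q - p)
  rw [add_sub_cancel] at hq
  linarith [hπ.pos hc he.le (sub_pos.2 hpq)]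

theorem map_smul_of_nonneg (hπ : c.IsPriceFunctional e π) (hc : c.IsArbitrageFree) (he : 0 < e)
    {x : V} (hx : 0 ≤ x) (a : ℝ) : π (a • x) = a * π x := by
  let f : ℝ →+ ℝ := AddMonoidHom.mk' (fun r => π (r • x)) fun r s => by
    rw [add_smul]; exact hπ.map_add hc he _ _
  have hf : Monotone f := fun r s hrs =>
    (hπ.strictMono hc he).monotone (smul_le_smul_of_nonneg_right hrs hx)
  simpa [f] using f.apply_eq_mul_of_monotone hf a

theorem map_smul (hπ : c.IsPriceFunctional e π) (hc : c.IsArbitrageFree) (he : 0 < e)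
    (hV : (ConvexCone.positive ℝ V).IsReproducing) (a : ℝ) (x : V) : π (a • x) = a * π x := by
  obtain ⟨y, hy, z, hz, rfl⟩ := Set.mem_sub.1 (hV.symm ▸ Set.mem_univ x)
  let f : V →+ ℝ := AddMonoidHom.mk' π (hπ.map_add hc he)
  change f (a • (y - z)) = a * f (y - z)
  rw [smul_sub, map_sub, map_sub]
  simp only [f, AddMonoidHom.mk'_apply, hπ.map_smul_of_nonneg hc he (ConvexCone.mem_positive.1 hy),
    hπ.map_smul_of_nonneg hc he (ConvexCone.mem_positive.1 hz)]
  ring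

theorem changeNumeraire (hπ : c.IsPriceFunctional e π) (hc : c.IsArbitrageFree) (he : 0 < e)
    (hV : (ConvexCone.positive ℝ V).IsReproducing) {f : V} (hf : 0 < f) :
    c.IsPriceFunctional f (fun p => π p / π f) := fun p =>
  hπ.rel_of_eq <| by rw [hπ.map_smul hc he hV, div_mul_cancel₀ _ (hπ.pos hc he.le hf).ne']

end IsPriceFunctional

end AddCon

namespace MeasureTheory

namespace VectorMeasure

variable {α M : Type*} [MeasurableSpace α] [TopologicalSpace M] [AddCommMonoid M] [PartialOrder M]

instance [IsOrderedAddMonoid M] [ContinuousAdd M] : IsOrderedAddMonoid (VectorMeasure α M) where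
  add_le_add_left _ _ h c i hi := by simpa using add_le_add_left (h i hi) (c i)

instance {R : Type*} [Semiring R] [PartialOrder R] [DistribMulAction R M] [ContinuousConstSMul R M]
    [PosSMulMono R M] : PosSMulMono R (VectorMeasure α M) where
  smul_le_smul_of_nonneg_left a ha v w h i hi := by
    simpa using smul_le_smul_of_nonneg_left (h i hi) ha

end VectorMeasure

theorem SignedMeasure.isReproducing_positive {α : Type*} [MeasurableSpace α] :
    (ConvexCone.positive ℝ (SignedMeasure α)).IsReproducing := by
  refine ConvexCone.IsReproducing.of_univ_subset fun s _ => ?_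
  have hs := s.toSignedMeasure_toJordanDecomposition
  exact ⟨_, Measure.zero_le_toSignedMeasure _, _, Measure.zero_le_toSignedMeasure _, hs⟩

end MeasureTheory

theorem ConvexCone.IsReproducing.prod_positive {V W : Type*} [AddCommGroup V] [PartialOrder V]
    [IsOrderedAddMonoid V] [Module ℝ V] [PosSMulMono ℝ V] [AddCommGroup W] [PartialOrder W]
    [IsOrderedAddMonoid W] [Module ℝ W] [PosSMulMono ℝ W]
    (hV : (ConvexCone.positive ℝ V).IsReproducing) (hW : (ConvexCone.positive ℝ W).IsReproducing) :
    (ConvexCone.positive ℝ (V × W)).IsReproducing := by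
  refine ConvexCone.IsReproducing.of_univ_subset fun x _ => ?_
  obtain ⟨y₁, hy₁, z₁, hz₁, h₁⟩ := Set.mem_sub.1 (hV.symm ▸ Set.mem_univ x.1)
  obtain ⟨y₂, hy₂, z₂, hz₂, h₂⟩ := Set.mem_sub.1 (hW.symm ▸ Set.mem_univ x.2)
  exact ⟨(y₁, y₂), ⟨hy₁, hy₂⟩, (z₁, z₂), ⟨hz₁, hz₂⟩, Prod.ext h₁ h₂⟩

theorem uzcb_pos (t : ℝ≥0) : 0 < uzcb t := by
  refine (Measure.zero_le_toSignedMeasure _).lt_of_ne' fun h => Measure.dirac_ne_zero (a := t) ?_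
  rw [← Measure.toSignedMeasure_eq_toSignedMeasure_iff, Measure.toSignedMeasure_zero]
  exact h

def IsCombinedMarket.toAddCon {R : SignedMeasure ℝ≥0 × SignedMeasure ℝ≥0 →
    SignedMeasure ℝ≥0 × SignedMeasure ℝ≥0 → Prop} (hM : IsCombinedMarket R) :
    AddCon (SignedMeasure ℝ≥0 × SignedMeasure ℝ≥0) :=
  AddCon.ofSymmAdd R hM.1 (hM.2.1 _ _) (hM.2.2.1 _ _ _ _)

theorem NoArbC.isArbitrageFree {R : SignedMeasure ℝ≥0 × SignedMeasure ℝ≥0 →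
    SignedMeasure ℝ≥0 × SignedMeasure ℝ≥0 → Prop} (hM : IsCombinedMarket R) (hNA : NoArbC R) :
    hM.toAddCon.IsArbitrageFree :=
  fun p hp h0 => hNA ⟨p, hp.le.1, hp.le.2, hp.ne', h0⟩

/-- Existence of the (forward) 2-price under NA in a combined market:
for every t there is a uniquely determined time-t forward 2-price, it is linear and
strictly positive on the positive cone minus the origin, and it equals
π_{1,t} / π_{1,t}(o, δ_t), where π_{1,t} = π₁ / P¹_t and P¹_t = π₁(δ_t, o). -/
theorem forward_two_price_existence
    (R : SignedMeasure ℝ≥0 × SignedMeasure ℝ≥0 →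
         SignedMeasure ℝ≥0 × SignedMeasure ℝ≥0 → Prop)
    (hM : IsCombinedMarket R) (hNA : NoArbC R)
    (π₁ : SignedMeasure ℝ≥0 × SignedMeasure ℝ≥0 → ℝ)
    (hπ₁ : ∀ p, R p (π₁ p • ((uzcb 0, 0) : SignedMeasure ℝ≥0 × SignedMeasure ℝ≥0))) :
    ∀ t : ℝ≥0,
      -- existence and uniqueness of the time-t forward 2-price :
      (∃! π₂ : SignedMeasure ℝ≥0 × SignedMeasure ℝ≥0 → ℝ,
        ∀ p, R p (π₂ p • (((0 : SignedMeasure ℝ≥0), uzcb t) :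
          SignedMeasure ℝ≥0 × SignedMeasure ℝ≥0))) ∧
      -- it is linear, strictly positive on the cone, and equals π_{1,t}/π_{1,t}(o,δ_t) :
      (∀ π₂ : SignedMeasure ℝ≥0 × SignedMeasure ℝ≥0 → ℝ,
        (∀ p, R p (π₂ p • (((0 : SignedMeasure ℝ≥0), uzcb t) :
          SignedMeasure ℝ≥0 × SignedMeasure ℝ≥0))) →
        (∀ a b : ℝ, ∀ p q, π₂ (a • p + b • q) = a * π₂ p + b * π₂ q) ∧
        (∀ p : SignedMeasure ℝ≥0 × SignedMeasure ℝ≥0,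
          0 ≤ p.1 → 0 ≤ p.2 → p ≠ 0 → 0 < π₂ p) ∧
        π₂ = fun p =>
          (π₁ p / π₁ ((uzcb t, 0) : SignedMeasure ℝ≥0 × SignedMeasure ℝ≥0)) /
          (π₁ (((0 : SignedMeasure ℝ≥0), uzcb t)) /
            π₁ ((uzcb t, 0) : SignedMeasure ℝ≥0 × SignedMeasure ℝ≥0))) := by
  intro t
  have hc := hNA.isArbitrageFree hM
  have hπ : hM.toAddCon.IsPriceFunctional (uzcb 0, 0) π₁ := hπ₁
  have he : (0 : SignedMeasure ℝ≥0 × SignedMeasure ℝ≥0) < (uzcb 0, 0) :=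
    Prod.mk_lt_mk_iff_left.2 (uzcb_pos 0)
  have hf : (0 : SignedMeasure ℝ≥0 × SignedMeasure ℝ≥0) < (0, uzcb t) :=
    Prod.mk_lt_mk_iff_right.2 (uzcb_pos t)
  have hg : (0 : SignedMeasure ℝ≥0 × SignedMeasure ℝ≥0) < (uzcb t, 0) :=
    Prod.mk_lt_mk_iff_left.2 (uzcb_pos t)
  have hV : (ConvexCone.positive ℝ (SignedMeasure ℝ≥0 × SignedMeasure ℝ≥0)).IsReproducing :=
    .prod_positive SignedMeasure.isReproducing_positive SignedMeasure.isReproducing_positive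
  have hπ₂ := hπ.changeNumeraire hc he hV hf
  refine ⟨⟨_, hπ₂, fun π₂ h => hπ₂.unique h hc hf⟩, fun π₂ h => ?_⟩
  replace h : hM.toAddCon.IsPriceFunctional (0, uzcb t) π₂ := h
  refine ⟨fun a b p q => ?_, fun p h₁ h₂ h₀ => h.pos hc hf.le (lt_of_le_of_ne ⟨h₁, h₂⟩ h₀.symm),
    (hπ₂.unique h hc hf).trans ?_⟩
  · rw [h.map_add hc hf, h.map_smul hc hf hV, h.map_smul hc hf hV]
  · funext p
    exact (div_div_div_cancel_right₀ (hπ.pos hc he.le hg).ne' _ _).symm
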